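/- Define the binary Shannon entropy H₂(x) = −x·log₂x − (1−x)·log₂(1−x), with the convention 0·log₂0 = 0. For all p, q ∈ [0,1] with pq < 1, setting a₁ = (1-p)(1-q)/(1-pq), a₂ = p(1-q)/(1-pq), a₃ = (1-p)q/(1-pq), one has a₁·log₂a₁ + a₂·log₂a₂ + a₃·log₂a₃ = (H₂(pq) − H₂(p) − H₂(q))/(1−pq). Equivalently, the Shannon entropy of the eigenvalue distribution (a₁,a₂,a₃) equals (H₂(p) + H₂(q) − H₂(pq))/(1−pq). -/

import Mathlib

/-!
The rules `xy log(xy) = y (x log x) + x (y log y)` and `(x/d) log(x/d) = (x log x - x log d)/d`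
hold for all reals (with `log 0 = 0` and `x/0 = 0`), so every term on both sides becomes a combination of `t log₂ t` for `t ∈ {p, 1 - p, q, 1 - q}` and of `log₂ (1 - pq)`.
The numerators of the `aᵢ` sum to `1 - pq`, and comparing coefficients is a polynomial identity.
-/
/-- The binary Shannon entropy `H₂(x) = −x·log₂x − (1−x)·log₂(1−x)`,
with the convention `0·log₂0 = 0` (automatic since `Real.logb 2 0 = 0`). -/
noncomputable def H2 (x : ℝ) : ℝ := -(x * Real.logb 2 x) - (1 - x) * Real.logb 2 (1 - x)

open Real

theorem mul_mul_logb_mul (b x y : ℝ) :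
    x * y * logb b (x * y) = y * (x * logb b x) + x * (y * logb b y) := by
  rcases eq_or_ne x 0 with rfl | hx
  · simp
  rcases eq_or_ne y 0 with rfl | hy
  · simp
  rw [logb_mul hx hy]
  ring

theorem div_mul_logb_div (b x d : ℝ) :
    x / d * logb b (x / d) = (x * logb b x - x * logb b d) / d := by
  rcases eq_or_ne x 0 with rfl | hx
  · simp
  rcases eq_or_ne d 0 with rfl | hd
  · simp
  rw [logb_div hx hd]
  ring

theorem eigenvalue_entropy_identity_general (p q : ℝ) :
    ((1 - p) * (1 - q) / (1 - p * q)) * Real.logb 2 ((1 - p) * (1 - q) / (1 - p * q)) +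
      (p * (1 - q) / (1 - p * q)) * Real.logb 2 (p * (1 - q) / (1 - p * q)) +
      ((1 - p) * q / (1 - p * q)) * Real.logb 2 ((1 - p) * q / (1 - p * q)) =
    (H2 (p * q) - H2 p - H2 q) / (1 - p * q) := by
  simp only [div_mul_logb_div, H2, mul_mul_logb_mul]
  ring

theorem eigenvalue_entropy_identity (p q : ℝ) (hp : p ∈ Set.Icc (0:ℝ) 1)
    (hq : q ∈ Set.Icc (0:ℝ) 1) (hpq : p * q < 1) :
    ((1 - p) * (1 - q) / (1 - p * q)) * Real.logb 2 ((1 - p) * (1 - q) / (1 - p * q)) +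
      (p * (1 - q) / (1 - p * q)) * Real.logb 2 (p * (1 - q) / (1 - p * q)) +
      ((1 - p) * q / (1 - p * q)) * Real.logb 2 ((1 - p) * q / (1 - p * q)) =
    (H2 (p * q) - H2 p - H2 q) / (1 - p * q) :=
  eigenvalue_entropy_identity_general p q
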